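/- Let 2/3 < ν < 4/5 and define S_SG(ζ) := tan((ζ + iπν)/(2i)) / tan((ζ − iπν)/(2i)). Then, in the physical strip {ζ ∈ ℂ : 0 < Im ζ < π}, the function S_SG is meromorphic with exactly two poles, located at ζ = iπν and ζ = iπ(1 − ν), and both poles are simple; at every other point of the strip S_SG is holomorphic. -/

import Mathlib

/-!
With `w = ζ / (2i)` and `a = πν / 2` we have `S_SG = tan (w + a) / tan (w - a)`, and on the strip
`Re w = Im ζ / 2 ∈ (0, π / 2)`. For `0 ≤ ν ≤ 1` this leaves `w + a = π / 2`, i.e. `ζ = iπ(1 - ν)`,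
as the only zero of `cos (w + a)`, and `w = a`, i.e. `ζ = iπν`, as the only zero of `tan (w - a)`;
away from them the quotient is analytic. At each of the two points the vanishing factor has
derivative `±1 / (2i)` while the other factor tends to `tan (πν)` (resp. `1 / tan (π/2 - πν)`,
which is the same), so the poles are simple with residues `±2i tan (πν)`, nonzero as `2ν ∉ ℤ`.
-/

open Complex Filter Topology

/-- The sine-Gordon breather–breather (b₁b₁) scattering function. -/
noncomputable def SSG (ν : ℝ) (ζ : ℂ) : ℂ :=
  Complex.tan ((ζ + Complex.I * (Real.pi : ℂ) * (ν : ℂ)) / (2 * Complex.I)) /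
  Complex.tan ((ζ - Complex.I * (Real.pi : ℂ) * (ν : ℂ)) / (2 * Complex.I))

open scoped Real

namespace Complex

theorem analyticAt_tan {z : ℂ} (h : cos z ≠ 0) : AnalyticAt ℂ tan z := by
  rw [show tan = fun w => sin w / cos w from funext tan_eq_sin_div_cos]
  exact analyticAt_sin.div analyticAt_cos h

-- `tan` is `sin / cos`, with the junk value `0` where `cos` vanishes.
theorem cos_ne_zero_of_tan_ne_zero {z : ℂ} (h : tan z ≠ 0) : cos z ≠ 0 := fun hc =>
  h (by rw [tan_eq_sin_div_cos, hc, div_zero])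

theorem eq_pi_div_two_of_cos_eq_zero {z : ℂ} (h : cos z = 0) (h0 : 0 < z.re) (hπ : z.re < π) :
    z = π / 2 := by
  obtain ⟨k, rfl⟩ := cos_eq_zero_iff.mp h
  have hre : (((2 * k + 1) * π / 2 : ℂ)).re = (2 * k + 1) * π / 2 := by simp
  rw [hre] at h0 hπ
  have hk : k = 0 := by
    have hlo : (-1 : ℝ) < k := by nlinarith [Real.pi_pos]
    have hhi : (k : ℝ) < 1 := by nlinarith [Real.pi_pos]
    norm_cast at hlo hhi
    omega
  simp [hk]

theorem eq_zero_of_tan_eq_zero {z : ℂ} (h : tan z = 0) (h0 : -(π / 2) < z.re)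
    (hπ : z.re < π / 2) : z = 0 := by
  obtain ⟨k, rfl⟩ := tan_eq_zero_iff.mp h
  have hre : ((k * π / 2 : ℂ)).re = k * π / 2 := by simp
  rw [hre] at h0 hπ
  have hk : k = 0 := by
    have hlo : (-1 : ℝ) < k := by nlinarith [Real.pi_pos]
    have hhi : (k : ℝ) < 1 := by nlinarith [Real.pi_pos]
    norm_cast at hlo hhi
    omega
  simp [hk]

theorem div_two_mul_I_re (z : ℂ) : (z / (2 * I)).re = z.im / 2 := by
  rw [div_mul_eq_div_div, div_I, neg_re, mul_re, I_re, I_im]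
  simp

theorem tan_pi_mul_ne_zero {x : ℂ} (hx : ∀ k : ℤ, 2 * x ≠ k) : tan (π * x) ≠ 0 := by
  intro h
  obtain ⟨k, hk⟩ := tan_eq_zero_iff.mp h
  apply hx k
  have hπ : (π : ℂ) ≠ 0 := ofReal_ne_zero.mpr Real.pi_ne_zero
  apply mul_left_cancel₀ hπ
  linear_combination -2 * hk

end Complex

theorem tendsto_sub_mul_div_of_hasDerivAt {𝕜 : Type*} [NontriviallyNormedField 𝕜] {f g : 𝕜 → 𝕜}
    {p d : 𝕜} (hf : ContinuousAt f p) (hg : HasDerivAt g d p) (hgp : g p = 0) (hd : d ≠ 0) :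
    Tendsto (fun z => (z - p) * (f z / g z)) (𝓝[≠] p) (𝓝 (f p / d)) := by
  have hslope := (hasDerivAt_iff_tendsto_slope.mp hg).inv₀ hd
  rw [div_eq_mul_inv]
  refine ((hf.tendsto.mono_left nhdsWithin_le_nhds).mul hslope).congr fun z => ?_
  rw [slope_def_field, hgp, sub_zero, inv_div]
  ring

section SSG

variable {ν : ℝ}

theorem cos_SSG_num_arg_ne_zero (hν0 : 0 ≤ ν) (hν1 : ν ≤ 1) {ζ : ℂ} (h0 : 0 < ζ.im)
    (hπ : ζ.im < π) (hζ : ζ ≠ I * π * (1 - ν : ℝ)) : cos ((ζ + I * π * ν) / (2 * I)) ≠ 0 := by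
  intro h
  have hre : ((ζ + I * π * ν) / (2 * I)).re = (ζ.im + π * ν) / 2 := by
    rw [div_two_mul_I_re]; simp
  have hpt := eq_pi_div_two_of_cos_eq_zero h (by rw [hre]; nlinarith [Real.pi_pos])
    (by rw [hre]; nlinarith [Real.pi_pos])
  rw [div_eq_iff (by simp)] at hpt
  exact hζ (by push_cast; linear_combination hpt)

theorem tan_SSG_den_arg_ne_zero (hν0 : 0 ≤ ν) (hν1 : ν ≤ 1) {ζ : ℂ} (h0 : 0 < ζ.im)
    (hπ : ζ.im < π) (hζ : ζ ≠ I * π * ν) : tan ((ζ - I * π * ν) / (2 * I)) ≠ 0 := by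
  intro h
  have hre : ((ζ - I * π * ν) / (2 * I)).re = (ζ.im - π * ν) / 2 := by
    rw [div_two_mul_I_re]; simp
  have hpt := eq_zero_of_tan_eq_zero h (by rw [hre]; nlinarith [Real.pi_pos])
    (by rw [hre]; nlinarith [Real.pi_pos])
  rw [div_eq_zero_iff, sub_eq_zero] at hpt
  exact hζ (hpt.resolve_right (by simp))

theorem analyticAt_SSG (hν0 : 0 ≤ ν) (hν1 : ν ≤ 1) {ζ : ℂ} (h0 : 0 < ζ.im) (hπ : ζ.im < π)
    (hζ₁ : ζ ≠ I * π * ν) (hζ₂ : ζ ≠ I * π * (1 - ν : ℝ)) : AnalyticAt ℂ (SSG ν) ζ := by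
  have hden_ne := tan_SSG_den_arg_ne_zero hν0 hν1 h0 hπ hζ₁
  have hnum : AnalyticAt ℂ (fun ζ => tan ((ζ + I * π * ν) / (2 * I))) ζ :=
    (analyticAt_tan (cos_SSG_num_arg_ne_zero hν0 hν1 h0 hπ hζ₂)).comp
      (f := fun ζ => (ζ + I * π * ν) / (2 * I)) (by fun_prop (disch := simp))
  have hden : AnalyticAt ℂ (fun ζ => tan ((ζ - I * π * ν) / (2 * I))) ζ :=
    (analyticAt_tan (cos_ne_zero_of_tan_ne_zero hden_ne)).comp
      (f := fun ζ => (ζ - I * π * ν) / (2 * I)) (by fun_prop (disch := simp))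
  exact hnum.div hden hden_ne

theorem tendsto_sub_mul_SSG_at_I_pi_mul (hν : tan (π * ν) ≠ 0) :
    Tendsto (fun ζ => (ζ - I * π * ν) * SSG ν ζ) (𝓝[≠] (I * π * ν))
      (𝓝 (2 * I * tan (π * ν))) := by
  have hA : (I * π * ν + I * π * ν) / (2 * I) = π * ν := by field_simp; ring
  have hB : (I * π * ν - I * π * ν) / (2 * I) = 0 := by simp
  have hnum : ContinuousAt (fun ζ => tan ((ζ + I * π * ν) / (2 * I))) (I * π * ν) :=
    (continuousAt_tan.mpr (cos_ne_zero_of_tan_ne_zero hν)).comp_of_eq (by fun_prop) hA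
  have hden : HasDerivAt (fun ζ => tan ((ζ - I * π * ν) / (2 * I))) (1 / (2 * I)) (I * π * ν) := by
    simpa [Function.comp_def] using (hasDerivAt_tan (x := 0) (by simp)).comp_of_eq _
      (((hasDerivAt_id' _).sub_const (I * π * ν)).div_const (2 * I)) hB.symm
  simp only [SSG]
  convert tendsto_sub_mul_div_of_hasDerivAt hnum hden (by simp) (by simp) using 2
  rw [hA]
  field_simp

theorem SSG_eq_sin_div_tan_div_cos (ζ : ℂ) :
    SSG ν ζ = sin ((ζ + I * π * ν) / (2 * I)) / tan ((ζ - I * π * ν) / (2 * I)) /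
      cos ((ζ + I * π * ν) / (2 * I)) := by
  rw [SSG, tan_eq_sin_div_cos, div_right_comm]

theorem tendsto_sub_mul_SSG_at_I_pi_mul_one_sub (hν : tan (π * ν) ≠ 0) :
    Tendsto (fun ζ => (ζ - I * π * (1 - ν : ℝ)) * SSG ν ζ) (𝓝[≠] (I * π * (1 - ν : ℝ)))
      (𝓝 (-(2 * I * tan (π * ν)))) := by
  set p : ℂ := I * π * (1 - ν : ℝ)
  have hA : (p + I * π * ν) / (2 * I) = π / 2 := by
    simp only [p]; field_simp; push_cast; ring
  have hB : (p - I * π * ν) / (2 * I) = π / 2 - π * ν := by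
    simp only [p]; field_simp; push_cast; ring
  have htan : tan (π / 2 - π * ν) ≠ 0 := by
    rw [tan_pi_div_two_sub]
    exact inv_ne_zero hν
  have hnum : ContinuousAt
      (fun ζ => sin ((ζ + I * π * ν) / (2 * I)) / tan ((ζ - I * π * ν) / (2 * I))) p :=
    (continuous_sin.continuousAt.comp (by fun_prop)).div
      ((continuousAt_tan.mpr (cos_ne_zero_of_tan_ne_zero htan)).comp_of_eq (by fun_prop) hB)
      (by rwa [hB])
  have hden : HasDerivAt (fun ζ => cos ((ζ + I * π * ν) / (2 * I))) (-(1 / (2 * I))) p := by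
    simpa [hA] using (((hasDerivAt_id' p).add_const (I * π * ν)).div_const (2 * I)).ccos
  simp only [SSG_eq_sin_div_tan_div_cos]
  convert tendsto_sub_mul_div_of_hasDerivAt hnum hden (by simp [hA]) (by simp) using 2
  simp only [hA, hB, sin_pi_div_two, tan_pi_div_two_sub]
  field_simp

end SSG

theorem SSG_poles_in_strip (ν : ℝ) (h1 : 2/3 < ν) (h2 : ν < 4/5) :
    (∀ ζ : ℂ, 0 < ζ.im → ζ.im < Real.pi →
      ζ ≠ Complex.I * (Real.pi : ℂ) * (ν : ℂ) →
      ζ ≠ Complex.I * (Real.pi : ℂ) * ((1 - ν : ℝ) : ℂ) →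
      AnalyticAt ℂ (SSG ν) ζ) ∧
    (∃ r : ℂ, r ≠ 0 ∧ Filter.Tendsto
      (fun ζ : ℂ => (ζ - Complex.I * (Real.pi : ℂ) * (ν : ℂ)) * SSG ν ζ)
      (𝓝[≠] (Complex.I * (Real.pi : ℂ) * (ν : ℂ))) (𝓝 r)) ∧
    (∃ r : ℂ, r ≠ 0 ∧ Filter.Tendsto
      (fun ζ : ℂ => (ζ - Complex.I * (Real.pi : ℂ) * ((1 - ν : ℝ) : ℂ)) * SSG ν ζ)
      (𝓝[≠] (Complex.I * (Real.pi : ℂ) * ((1 - ν : ℝ) : ℂ))) (𝓝 r)) := by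
  have htan : tan (π * ν) ≠ 0 := by
    refine tan_pi_mul_ne_zero fun k hk => ?_
    have hk' : 2 * ν = k := by exact_mod_cast hk
    have hlo : (1 : ℝ) < k := by linarith
    have hhi : (k : ℝ) < 2 := by linarith
    norm_cast at hlo hhi
    omega
  have hres : 2 * I * tan (π * ν) ≠ 0 := mul_ne_zero (by simp) htan
  exact ⟨fun ζ h0 hπ hζ₁ hζ₂ => analyticAt_SSG (by linarith) (by linarith) h0 hπ hζ₁ hζ₂,
    ⟨_, hres, tendsto_sub_mul_SSG_at_I_pi_mul htan⟩,
    ⟨_, neg_ne_zero.mpr hres, tendsto_sub_mul_SSG_at_I_pi_mul_one_sub htan⟩⟩
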